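/- There exist properties of pointed graphs expressible in ω-GML but not by any GMSC program; in particular, for any undecidable set U ⊆ ℕ, the property 'the number of out-neighbours of the distinguished node lies in U' is expressible in ω-GML (by the disjunction ⋁_{n ∈ U} ◇_{=n}⊤) but not by any GMSC program. -/

import Mathlib

/-- A finite directed node-labeled graph: finite node set `V`, out-neighbour
finsets `adj v`, and a labeling of nodes by sets of node label symbols from `α`. -/
structure LGraph (α : Type) : Type 1 where
  V : Type
  fintypeV : Fintype V
  adj : V → Finset V
  label : V → Set α

attribute [instance] LGraph.fintypeV

/-- Formulas of graded modal logic GML over node label symbols `α`: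
`⊤`, labels, negation, conjunction, and graded diamonds `◇_{≥k}`. -/
inductive GML (α : Type) : Type where
  | top : GML α
  | lab : α → GML α
  | neg : GML α → GML α
  | and : GML α → GML α → GML α
  | dia : ℕ → GML α → GML α

/-- Truth of a GML formula at a node of a labeled graph; `dia k φ` (`◇_{≥k}φ`)
holds iff at least `k` out-neighbours satisfy `φ`. -/
def GML.sat {α : Type} (G : LGraph α) : GML α → G.V → Prop
  | .top, _ => True
  | .lab p, v => p ∈ G.label v
  | .neg φ, v => ¬ GML.sat G φ v
  | .and φ ψ, v => GML.sat G φ v ∧ GML.sat G ψ v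
  | .dia k φ, v => ∃ s : Finset G.V, s ⊆ G.adj v ∧ k ≤ s.card ∧ ∀ u ∈ s, GML.sat G φ u

/-- `⊥` as a GML formula. -/
def GML.bot {α : Type} : GML α := .neg .top

/-- `□φ := ¬◇_{≥1}¬φ`. -/
def GML.box {α : Type} (φ : GML α) : GML α := .neg (.dia 1 (.neg φ))

/-- `◇_{=n}φ := ◇_{≥n}φ ∧ ¬◇_{≥n+1}φ`. -/
def GML.diaEq {α : Type} (n : ℕ) (φ : GML α) : GML α := .and (.dia n φ) (.neg (.dia (n + 1) φ))

/-- Schemata of GMSC over node label symbols `α` and head predicates (schema variables) `ν`. -/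
inductive Schema (α ν : Type) : Type where
  | top : Schema α ν
  | lab : α → Schema α ν
  | var : ν → Schema α ν
  | neg : Schema α ν → Schema α ν
  | and : Schema α ν → Schema α ν → Schema α ν
  | dia : ℕ → Schema α ν → Schema α ν

/-- Substituting a GML formula for each head predicate of a schema. -/
def Schema.subst {α ν : Type} (σ : ν → GML α) : Schema α ν → GML α
  | .top => .top
  | .lab p => .lab p
  | .var X => σ X
  | .neg φ => .neg (φ.subst σ)
  | .and φ ψ => .and (φ.subst σ) (ψ.subst σ)
  | .dia k φ => .dia k (φ.subst σ)

/-- A GMSC program over node label symbols `α` with head predicates `ν`: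
terminal clauses `X(0) :− term X`, iteration clauses `X :− iter X`, and a set
`app` of appointed predicates. -/
structure Program (α ν : Type) where
  term : ν → GML α
  iter : ν → Schema α ν
  app : Set ν

/-- The `n`-th iteration formula `Xⁿ` of a head predicate `X`: `X⁰` is the terminal body,
and `X^{n+1}` is the iteration body with each head predicate `Y` replaced by `Yⁿ`. -/
def Program.iterFormula {α ν : Type} (P : Program α ν) : ℕ → ν → GML α
  | 0 => P.term
  | n + 1 => fun X => (P.iter X).subst (P.iterFormula n)

/-- The program accepts `(G, w)` iff some appointed predicate's iteration formula is
true at `w` in some round. -/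
def Program.accepts {α ν : Type} (P : Program α ν) (G : LGraph α) (w : G.V) : Prop :=
  ∃ X ∈ P.app, ∃ n : ℕ, GML.sat G (P.iterFormula n X) w

/-!
A GMSC program mentions only finitely many grades, all at most some `K`. Formulas whose grades
are bounded by `K` cannot tell apart the centres of unlabelled stars with `m ≥ K` and `m' ≥ K`
leaves, so an out-degree set `U` defined by a GMSC program satisfies `m ∈ U ↔ min m K ∈ U`,
and such a set is computable.
-/

open Finset

theorem ComputablePred.of_iff_min (K : ℕ) {p : ℕ → Prop} (h : ∀ n, p n ↔ p (min n K)) :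
    ComputablePred p := by
  classical
  let table : Fin (K + 1) → Bool := fun i => decide (p i)
  let clamp : ℕ → Fin (K + 1) := fun n => ⟨min n K, by omega⟩
  have hclamp : Primrec clamp :=
    Primrec.fin_val_iff.1 (Primrec.nat_min.comp Primrec.id (Primrec.const K))
  refine ⟨inferInstance, ((Primrec.dom_finite table).comp hclamp).to_comp.of_eq fun n => ?_⟩
  simp [table, clamp, ← h]

namespace GML

variable {α : Type}

open scoped Classical in
theorem sat_dia_iff (G : LGraph α) (k : ℕ) (φ : GML α) (v : G.V) :
    (dia k φ).sat G v ↔ k ≤ #{u ∈ G.adj v | φ.sat G u} := by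
  refine ⟨fun ⟨s, hs, hk, hφ⟩ => hk.trans (card_le_card fun u hu => ?_),
    fun hk => ⟨_, filter_subset _ _, hk, fun u hu => (mem_filter.1 hu).2⟩⟩
  exact mem_filter.2 ⟨hs hu, hφ u hu⟩

theorem sat_dia_top_iff (G : LGraph α) (k : ℕ) (v : G.V) :
    (dia k top).sat G v ↔ k ≤ (G.adj v).card := by
  classical
  rw [sat_dia_iff, filter_true_of_mem fun u _ => (show top.sat G u from trivial)]

theorem sat_diaEq_top_iff (G : LGraph α) (n : ℕ) (v : G.V) :
    (diaEq n top).sat G v ↔ (G.adj v).card = n := by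
  rw [diaEq, sat, sat, sat_dia_top_iff, sat_dia_top_iff]
  omega

def maxGrade : GML α → ℕ
  | top | lab _ => 0
  | neg φ => φ.maxGrade
  | and φ ψ => max φ.maxGrade ψ.maxGrade
  | dia k φ => max k φ.maxGrade

/-- Truth at an unlabelled node without out-neighbours. -/
def HoldsAtSink : GML α → Prop
  | top => True
  | lab _ => False
  | neg φ => ¬ φ.HoldsAtSink
  | and φ ψ => φ.HoldsAtSink ∧ ψ.HoldsAtSink
  | dia k _ => k = 0

/-- Truth at the centre of an unlabelled star with `m` leaves. -/
def HoldsAtStarCentre (m : ℕ) : GML α → Prop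
  | top => True
  | lab _ => False
  | neg φ => ¬ φ.HoldsAtStarCentre m
  | and φ ψ => φ.HoldsAtStarCentre m ∧ ψ.HoldsAtStarCentre m
  | dia k φ => k = 0 ∨ k ≤ m ∧ φ.HoldsAtSink

theorem sat_iff_holdsAtSink {G : LGraph α} {v : G.V} (hadj : G.adj v = ∅)
    (hlabel : G.label v = ∅) (φ : GML α) : φ.sat G v ↔ φ.HoldsAtSink := by
  induction φ with
  | top => simp [sat, HoldsAtSink]
  | lab p => simp [sat, HoldsAtSink, hlabel]
  | neg φ ih => simp [sat, HoldsAtSink, ih]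
  | and φ ψ ihφ ihψ => simp [sat, HoldsAtSink, ihφ, ihψ]
  | dia k φ => simp [sat_dia_iff, HoldsAtSink, hadj]

theorem sat_iff_holdsAtStarCentre {G : LGraph α} {v : G.V} (hlabel : G.label v = ∅)
    (hleaves : ∀ u ∈ G.adj v, G.adj u = ∅ ∧ G.label u = ∅) (φ : GML α) :
    φ.sat G v ↔ φ.HoldsAtStarCentre (G.adj v).card := by
  classical
  induction φ with
  | top => simp [sat, HoldsAtStarCentre]
  | lab p => simp [sat, HoldsAtStarCentre, hlabel]
  | neg φ ih => simp [sat, HoldsAtStarCentre, ih]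
  | and φ ψ ihφ ihψ => simp [sat, HoldsAtStarCentre, ihφ, ihψ]
  | dia k φ =>
    have hleaf : ∀ u ∈ G.adj v, (φ.sat G u ↔ φ.HoldsAtSink) := fun u hu =>
      sat_iff_holdsAtSink (hleaves u hu).1 (hleaves u hu).2 φ
    rw [sat_dia_iff, HoldsAtStarCentre]
    by_cases hφ : φ.HoldsAtSink
    · rw [filter_true_of_mem fun u hu => (hleaf u hu).2 hφ]
      simp only [hφ, and_true]
      omega
    · rw [filter_false_of_mem fun u hu => mt (hleaf u hu).1 hφ]
      simp [hφ]

theorem holdsAtStarCentre_min_iff {K : ℕ} {φ : GML α} (hφ : φ.maxGrade ≤ K) (m : ℕ) :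
    φ.HoldsAtStarCentre (min m K) ↔ φ.HoldsAtStarCentre m := by
  induction φ with
  | top | lab _ => rfl
  | neg φ ih => exact not_congr (ih hφ)
  | and φ ψ ihφ ihψ =>
    rw [maxGrade, max_le_iff] at hφ
    exact and_congr (ihφ hφ.1) (ihψ hφ.2)
  | dia k φ =>
    rw [maxGrade, max_le_iff] at hφ
    simp only [HoldsAtStarCentre, le_min_iff, hφ.1, and_true]

end GML

namespace Schema

variable {α ν : Type}

def maxGrade : Schema α ν → ℕ
  | top | lab _ | var _ => 0
  | neg φ => φ.maxGrade
  | and φ ψ => max φ.maxGrade ψ.maxGrade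
  | dia k φ => max k φ.maxGrade

theorem maxGrade_subst_le {σ : ν → GML α} {K : ℕ} (hσ : ∀ X, (σ X).maxGrade ≤ K)
    (S : Schema α ν) : (S.subst σ).maxGrade ≤ max S.maxGrade K := by
  induction S with
  | top | lab _ => simp [subst, GML.maxGrade]
  | var X => exact (hσ X).trans (le_max_right _ _)
  | neg φ ih => exact ih
  | and φ ψ ihφ ihψ =>
    simp only [subst, GML.maxGrade, maxGrade, max_le_iff] at *
    omega
  | dia k φ ih =>
    simp only [subst, GML.maxGrade, maxGrade, max_le_iff] at *
    omega

end Schema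

namespace Program

variable {α ν : Type} [Fintype ν]

def maxGrade (P : Program α ν) : ℕ :=
  max (univ.sup fun X => (P.term X).maxGrade) (univ.sup fun X => (P.iter X).maxGrade)

theorem maxGrade_iterFormula_le (P : Program α ν) (n : ℕ) (X : ν) :
    (P.iterFormula n X).maxGrade ≤ P.maxGrade := by
  induction n generalizing X with
  | zero => exact (le_sup (f := fun Y => (P.term Y).maxGrade) (mem_univ X)).trans (le_max_left _ _)
  | succ n ih =>
    refine (Schema.maxGrade_subst_le ih (P.iter X)).trans (max_le ?_ le_rfl)
    exact (le_sup (f := fun Y => (P.iter Y).maxGrade) (mem_univ X)).trans (le_max_right _ _)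

end Program

/-- The unlabelled star whose centre `none` has `m` leaves. -/
def LGraph.star (α : Type) (m : ℕ) : LGraph α where
  V := Option (Fin m)
  fintypeV := inferInstance
  adj
    | none => univ.map .some
    | some _ => ∅
  label _ := ∅

theorem LGraph.card_adj_star {α : Type} (m : ℕ) : ((star α m).adj none).card = m := by
  simp [star]

theorem LGraph.sat_star_iff {α : Type} (m : ℕ) (φ : GML α) :
    φ.sat (star α m) none ↔ φ.HoldsAtStarCentre m := by
  have hleaves (u) (hu : u ∈ (star α m).adj none) :
      (star α m).adj u = ∅ ∧ (star α m).label u = ∅ := by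
    obtain ⟨i, -, rfl⟩ := mem_map.1 hu
    exact ⟨rfl, rfl⟩
  rw [GML.sat_iff_holdsAtStarCentre rfl hleaves, card_adj_star]

theorem Program.accepts_star_min_iff {α ν : Type} [Fintype ν] (P : Program α ν) (m : ℕ) :
    P.accepts (.star α (min m P.maxGrade)) none ↔ P.accepts (.star α m) none := by
  simp only [accepts, LGraph.sat_star_iff,
    GML.holdsAtStarCentre_min_iff (P.maxGrade_iterFormula_le _ _)]

/-- For any undecidable (non-computable) set `U ⊆ ℕ`, the property
"the number of out-neighbours of the distinguished node lies in `U`" is expressible in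
ω-GML by the countable disjunction `⋁_{n ∈ U} ◇_{=n}⊤` (a pointed graph satisfies some
disjunct iff its out-degree lies in `U`), but it is not expressible by any GMSC program. -/
theorem omega_gml_strictly_more_expressive_than_gmsc
    (α : Type) (U : Set ℕ) (hU : ¬ ComputablePred fun n => n ∈ U) :
    (∀ (G : LGraph α) (w : G.V),
        (G.adj w).card ∈ U ↔ ∃ n ∈ U, GML.sat G (GML.diaEq n GML.top) w) ∧
    ¬ ∃ (ν : Type) (_ : Fintype ν) (P : Program α ν),
        ∀ (G : LGraph α) (w : G.V), P.accepts G w ↔ (G.adj w).card ∈ U := by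
  refine ⟨fun G w => by simp [GML.sat_diaEq_top_iff], ?_⟩
  rintro ⟨ν, _, P, hP⟩
  have hstar (m : ℕ) : m ∈ U ↔ P.accepts (.star α m) none := by
    simpa [LGraph.card_adj_star] using (hP (.star α m) none).symm
  refine hU (ComputablePred.of_iff_min P.maxGrade fun m => ?_)
  rw [hstar, hstar, P.accepts_star_min_iff]
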